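/- arXiv:2110.06158 — 5 statements merged into one kernel-verified Lean document; each statement's English description precedes it below -/
import Mathlib

section
/- For all p = 2^n with n ≥ 4 and all distinct i and j from 1 to p/2: if |j−i| ≠ p/4 then M_p[i,j] = M_p[i,j+p/2] = M_p[i+p/2,j] and M_p^*[i,j] = M_p^*[i,j+p/2] = M_p^*[i+p/2,j], while if |j−i| = p/4 then M_p[i,j] = −M_p[i,j+p/2] = −M_p[i+p/2,j] and M_p^*[i,j] = −M_p^*[i,j+p/2] = −M_p^*[i+p/2,j]. -/
/-- The matrix `M₄` (1-indexed). -/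
def M4 (i j : ℕ) : ℤ :=
  (([[0,1,2,3],[-1,0,3,-2],[-2,-3,0,1],[-3,2,-1,0]] : List (List ℤ)).getD (i-1) []).getD (j-1) 0

/-- The matrix `M₄*` (1-indexed). -/
def M4s (i j : ℕ) : ℤ :=
  (([[0,-2,-3,-1],[2,0,1,-3],[3,-1,0,2],[1,3,-2,0]] : List (List ℤ)).getD (i-1) []).getD (j-1) 0

/-- For block-index difference `d`, `blockSC d = (s, c)` means that the corresponding
4×4 block of `M_p` is `s·M₄ + c·I` (and the block of `M_p*` is `s·M₄* − c·I`):
`(1,0)` if `d = 0`; `(-1,4)` if `d ≡ 1 (mod 4)`; `(-1,-4)` if `d ≡ -1 (mod 4)`;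
`(1, x+4)` if `d = y·2^x`, `x ≥ 1`, `y ≡ 1 (mod 4)`;
`(1, -(x+4))` if `d = y·2^x`, `x ≥ 1`, `y ≡ -1 (mod 4)`. -/
def blockSC (d : ℤ) : ℤ × ℤ :=
  if d = 0 then (1, 0)
  else if d % 4 = 1 then (-1, 4)
  else if d % 4 = 3 then (-1, -4)
  else
    let x : ℕ := d.natAbs.factorization 2
    if (d / (2:ℤ)^x) % 4 = 1 then (1, (x:ℤ) + 4) else (1, -((x:ℤ) + 4))

/-- Entry `(i,j)` (1-indexed) of `M_p`, for any `p = 2^n ≥ 4` and `1 ≤ i,j ≤ p`;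
the defining block formula depends only on `i` and `j`, not on `p`. -/
def Ment (i j : ℕ) : ℤ :=
  let d : ℤ := (((j-1)/4 : ℕ) : ℤ) - (((i-1)/4 : ℕ) : ℤ)
  (blockSC d).1 * M4 ((i-1) % 4 + 1) ((j-1) % 4 + 1)
    + (if (i-1) % 4 = (j-1) % 4 then (blockSC d).2 else 0)

/-- Entry `(i,j)` (1-indexed) of `M_p*`. -/
def Ments (i j : ℕ) : ℤ :=
  let d : ℤ := (((j-1)/4 : ℕ) : ℤ) - (((i-1)/4 : ℕ) : ℤ)
  (blockSC d).1 * M4s ((i-1) % 4 + 1) ((j-1) % 4 + 1)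
    + (if (i-1) % 4 = (j-1) % 4 then -(blockSC d).2 else 0)

/-- The `p × p` matrix `M_p`, `p = 2^n`, as a function on 1-based indices
(entries outside the index range `1,…,p` are set to `0`). -/
def Mp (n i j : ℕ) : ℤ :=
  if 1 ≤ i ∧ i ≤ 2^n ∧ 1 ≤ j ∧ j ≤ 2^n then Ment i j else 0

/-- The `p × p` matrix `M_p*`, `p = 2^n`, as a function on 1-based indices. -/
def Mps (n i j : ℕ) : ℤ :=
  if 1 ≤ i ∧ i ≤ 2^n ∧ 1 ≤ j ∧ j ≤ 2^n then Ments i j else 0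

/-- The base mappings `σ_{4,k}` : `sigma4 k i = σ_{4,k}(i)` (value `0` at the
undefined point `i = k`). -/
def sigma4 (k i : ℕ) : ℕ :=
  (([[0,4,2,3],[3,0,4,1],[4,1,0,2],[2,3,1,0]] : List (List ℕ)).getD (k-1) []).getD (i-1) 0

/-- The mappings `σ_{p,k}` for `p = 2^n`: `sigma n k i = σ_{2^n, k}(i)`
(value `0` at the undefined point `i = k`, and junk values for `n < 2`). -/
def sigma : ℕ → ℕ → ℕ → ℕ
  | 0, _, _ => 0
  | 1, _, _ => 0
  | 2, k, i => sigma4 k i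
  | n+3, k, i =>
    let P := 2^(n+2)
    if k ≤ P then
      if i = k + P then i
      else if i ≤ P then sigma (n+2) k i + P
      else sigma (n+2) k (i - P)
    else
      if i = k - P then i
      else if i ≤ P then sigma (n+2) (k - P) i + P
      else sigma (n+2) (k - P) (i - P)

lemma exOdd : ∀ N : ℕ, ∀ d : ℤ, d.natAbs ≤ N → d ≠ 0 →
    ∃ x : ℕ, ∃ y : ℤ, y % 2 = 1 ∧ d = y * 2 ^ x := by
  intro N
  induction N with
  | zero => intro d h1 h2; exfalso; omega
  | succ N ih =>
    intro d h1 h2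
    by_cases hp : d % 2 = 1
    · exact ⟨0, d, hp, by ring⟩
    · obtain ⟨x, y, hy, he⟩ := ih (d / 2) (by omega) (by omega)
      exact ⟨x + 1, y, hy, by rw [pow_succ, ← mul_assoc, ← he]; omega⟩

lemma blockSC_zero : blockSC 0 = (1, 0) := rfl

lemma blockSC_pow (x : ℕ) (y : ℤ) (hy : y % 2 = 1) :
    blockSC (y * 2 ^ x) =
      if x = 0 then (if y % 4 = 1 then ((-1 : ℤ), (4 : ℤ)) else (-1, -4))
      else (if y % 4 = 1 then ((1 : ℤ), (x : ℤ) + 4) else (1, -((x : ℤ) + 4))) := by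
  have hy0 : y ≠ 0 := by omega
  have hy4 : y % 4 = 1 ∨ y % 4 = 3 := by omega
  have hd0 : y * 2 ^ x ≠ 0 := mul_ne_zero hy0 (by positivity)
  rcases Nat.eq_zero_or_pos x with hx | hx
  · subst hx
    simp only [pow_zero, mul_one]
    rcases hy4 with h | h
    · rw [blockSC, if_neg hy0, if_pos h]; simp [h]
    · rw [blockSC, if_neg hy0, if_neg (by omega : ¬ y % 4 = 1), if_pos h]; simp [h]
  · have hpx : (2:ℤ) ^ x = 2 ^ (x - 1) * 2 := by rw [← pow_succ]; congr 1; omega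
    have h2 : (2:ℤ) ∣ y * 2 ^ x := ⟨y * 2 ^ (x - 1), by rw [hpx]; ring⟩
    obtain ⟨c, hc⟩ := h2
    have hm1 : (y * 2 ^ x) % 4 ≠ 1 := by omega
    have hm3 : (y * 2 ^ x) % 4 ≠ 3 := by omega
    have hfac : (y * 2 ^ x).natAbs.factorization 2 = x := by
      rw [Int.natAbs_mul]
      rw [Nat.factorization_mul (by omega) (by positivity)]
      simp only [Finsupp.coe_add, Pi.add_apply]
      rw [Int.natAbs_pow]
      rw [Nat.factorization_eq_zero_of_not_dvd (by omega)]
      simp [Nat.Prime.factorization_pow Nat.prime_two]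
    have hdiv : (y * 2 ^ x) / 2 ^ x = y := Int.mul_ediv_cancel _ (by positivity)
    rw [blockSC, if_neg hd0, if_neg hm1, if_neg hm3]
    simp only [hfac, hdiv, if_neg (by omega : ¬ x = 0)]

lemma blockSC_shift (m : ℕ) (hm : 1 ≤ m) (d : ℤ) (hd : d.natAbs < 2 ^ m) :
    ((blockSC (d + 2 ^ m)).1 = (blockSC d).1 ∧ (blockSC (d - 2 ^ m)).1 = (blockSC d).1) ∧
    (d ≠ 0 → d.natAbs ≠ 2 ^ (m - 1) →
      blockSC (d + 2 ^ m) = blockSC d ∧ blockSC (d - 2 ^ m) = blockSC d) ∧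
    (d.natAbs = 2 ^ (m - 1) →
      (blockSC (d + 2 ^ m)).2 = -(blockSC d).2 ∧ (blockSC (d - 2 ^ m)).2 = -(blockSC d).2) := by
  have h2m : (2:ℤ) ^ m = 2 * 2 ^ (m - 1) := by
    rw [← pow_succ']; congr 1; omega
  have hpos : (0:ℕ) < 2 ^ (m - 1) := by positivity
  by_cases hd0 : d = 0
  · subst hd0
    have e1 : (0:ℤ) + 2 ^ m = 1 * 2 ^ m := by ring
    have e2 : (0:ℤ) - 2 ^ m = (-1) * 2 ^ m := by ring
    rw [e1, e2, blockSC_pow m 1 (by norm_num), blockSC_pow m (-1) (by decide), blockSC_zero]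
    simp only [if_neg (show ¬ m = 0 by omega)]
    norm_num
    exact fun h => absurd h (by omega)
  · obtain ⟨x, y, hy, he⟩ := exOdd d.natAbs d le_rfl hd0
    have hyab : y.natAbs % 2 = 1 := by omega
    have habs : d.natAbs = y.natAbs * 2 ^ x := by
      rw [he, Int.natAbs_mul, Int.natAbs_pow]; norm_num
    have hx2 : 2 ^ x ≤ d.natAbs := by
      rw [habs]; exact Nat.le_mul_of_pos_left _ (by omega)
    have hxm : x < m := by
      have := lt_of_le_of_lt hx2 hd
      exact (Nat.pow_lt_pow_iff_right (by norm_num)).mp this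
    by_cases hxs : x + 2 ≤ m
    · -- full equality case
      have hk2 : 2 ≤ m - x := by omega
      have hpk : (2:ℤ) ^ m = 2 ^ (m - x) * 2 ^ x := by
        rw [← pow_add]; congr 1; omega
      obtain ⟨t, ht⟩ : ∃ t : ℤ, (2:ℤ) ^ (m - x) = 4 * t :=
        ⟨2 ^ (m - x - 2), by rw [show (4:ℤ) = 2 ^ 2 by norm_num, ← pow_add]; congr 1; omega⟩
      have e1 : d + 2 ^ m = (y + 2 ^ (m - x)) * 2 ^ x := by rw [he, hpk]; ring
      have e2 : d - 2 ^ m = (y - 2 ^ (m - x)) * 2 ^ x := by rw [he, hpk]; ring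
      have m1 : (y + 2 ^ (m - x)) % 2 = 1 := by omega
      have m2 : (y - 2 ^ (m - x)) % 2 = 1 := by omega
      have m14 : (y + 2 ^ (m - x)) % 4 = y % 4 := by omega
      have m24 : (y - 2 ^ (m - x)) % 4 = y % 4 := by omega
      have full : blockSC (d + 2 ^ m) = blockSC d ∧ blockSC (d - 2 ^ m) = blockSC d := by
        rw [e1, e2, he, blockSC_pow x y hy, blockSC_pow x _ m1, blockSC_pow x _ m2, m14, m24]
        exact ⟨rfl, rfl⟩
      refine ⟨⟨by rw [full.1], by rw [full.2]⟩, fun _ _ => full, fun hab => ?_⟩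
      exfalso
      have : y.natAbs * 2 ^ x = 2 ^ (m - 1 - x) * 2 ^ x := by
        rw [← pow_add, ← habs, hab]; congr 1; omega
      have hy2 : y.natAbs = 2 ^ (m - 1 - x) := Nat.eq_of_mul_eq_mul_right (by positivity) this
      have : 2 ^ (m - 1 - x) = 2 * 2 ^ (m - 2 - x) := by
        rw [← pow_succ']; congr 1; omega
      omega
    · -- flip case : x = m - 1, y = ±1
      have hxe : x = m - 1 := by omega
      subst hxe
      have hy1 : y.natAbs = 1 := by
        have : y.natAbs * 2 ^ (m-1) < 2 * 2 ^ (m-1) := by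
          rw [← habs]; calc d.natAbs < 2 ^ m := hd
            _ = 2 * 2 ^ (m-1) := by rw [← pow_succ']; congr 1; omega
        have := Nat.lt_of_mul_lt_mul_right this
        omega
      have habs' : d.natAbs = 2 ^ (m - 1) := by rw [habs, hy1, one_mul]
      have e1 : d + 2 ^ m = (y + 2) * 2 ^ (m - 1) := by rw [he, h2m]; ring
      have e2 : d - 2 ^ m = (y - 2) * 2 ^ (m - 1) := by rw [he, h2m]; ring
      have hy2 : y = 1 ∨ y = -1 := by omega
      refine ⟨?_, fun _ hne => absurd habs' hne, fun _ => ?_⟩ <;>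
      · rcases hy2 with h | h <;> subst h <;>
          rw [e1, e2, he, blockSC_pow _ _ (by decide), blockSC_pow _ _ (by decide),
            blockSC_pow _ _ (by decide)] <;>
          by_cases h0 : m - 1 = 0 <;> simp [h0]

lemma Ment_def (i j : ℕ) : Ment i j =
    (blockSC ((((j-1)/4 : ℕ) : ℤ) - (((i-1)/4 : ℕ) : ℤ))).1 * M4 ((i-1) % 4 + 1) ((j-1) % 4 + 1)
    + (if (i-1) % 4 = (j-1) % 4
        then (blockSC ((((j-1)/4 : ℕ) : ℤ) - (((i-1)/4 : ℕ) : ℤ))).2 else 0) := rfl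

lemma Ments_def (i j : ℕ) : Ments i j =
    (blockSC ((((j-1)/4 : ℕ) : ℤ) - (((i-1)/4 : ℕ) : ℤ))).1 * M4s ((i-1) % 4 + 1) ((j-1) % 4 + 1)
    + (if (i-1) % 4 = (j-1) % 4
        then -(blockSC ((((j-1)/4 : ℕ) : ℤ) - (((i-1)/4 : ℕ) : ℤ))).2 else 0) := rfl

lemma M4_diag (r : ℕ) (hr : r < 4) : M4 (r+1) (r+1) = 0 := by
  interval_cases r <;> rfl

lemma M4s_diag (r : ℕ) (hr : r < 4) : M4s (r+1) (r+1) = 0 := by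
  interval_cases r <;> rfl


/-- For all `p = 2^n` with `n ≥ 4` and all distinct `i, j` from 1 to `p/2`:
if `|j−i| ≠ p/4` then `M_p[i,j] = M_p[i,j+p/2] = M_p[i+p/2,j]` and likewise for `M_p*`,
while if `|j−i| = p/4` then these hold with minus signs. -/
theorem stmt2 (n p : ℕ) (hn : 4 ≤ n) (hp : p = 2^n)
    (i j : ℕ) (hi1 : 1 ≤ i) (hi2 : i ≤ p/2) (hj1 : 1 ≤ j) (hj2 : j ≤ p/2) (hij : i ≠ j) :
    (((j:ℤ) - (i:ℤ)).natAbs ≠ p/4 →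
      (Mp n i j = Mp n i (j + p/2) ∧ Mp n i j = Mp n (i + p/2) j) ∧
      (Mps n i j = Mps n i (j + p/2) ∧ Mps n i j = Mps n (i + p/2) j)) ∧
    (((j:ℤ) - (i:ℤ)).natAbs = p/4 →
      (Mp n i j = -(Mp n i (j + p/2)) ∧ Mp n i j = -(Mp n (i + p/2) j)) ∧
      (Mps n i j = -(Mps n i (j + p/2)) ∧ Mps n i j = -(Mps n (i + p/2) j))) := by
  subst hp
  set m := n - 3 with hmdef
  have hm1 : 1 ≤ m := by omega
  have hT : (2:ℕ)^(n-1) = 4 * 2^m := by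
    rw [show n - 1 = 2 + m by omega, pow_add]; norm_num
  have hqq : 2^n = 2 * 2^(n-1) := by
    rw [← pow_succ']; congr 1; omega
  have hq : 2^n / 2 = 2^(n-1) := by omega
  have hA : (2:ℕ)^n = 16 * 2^(m-1) := by
    rw [show (16:ℕ) = 2^4 by norm_num, ← pow_add]; congr 1; omega
  have hp4 : 2^n / 4 = 4 * 2^(m-1) := by omega
  rw [hq] at hi2 hj2 ⊢
  rw [hp4]
  -- in-range unfolding
  have hb : ∀ a b : ℕ, 1 ≤ a → a ≤ 2^n → 1 ≤ b → b ≤ 2^n →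
      Mp n a b = Ment a b ∧ Mps n a b = Ments a b := by
    intro a b h1 h2 h3 h4
    unfold Mp Mps
    rw [if_pos ⟨h1,h2,h3,h4⟩, if_pos ⟨h1,h2,h3,h4⟩]
    exact ⟨rfl, rfl⟩
  have r1 := hb i j hi1 (by omega) hj1 (by omega)
  have r2 := hb i (j + 2^(n-1)) hi1 (by omega) (by omega) (by omega)
  have r3 := hb (i + 2^(n-1)) j (by omega) (by omega) hj1 (by omega)
  rw [r1.1, r1.2, r2.1, r2.2, r3.1, r3.2]
  -- index shifts
  have e1 : (j + 2^(n-1) - 1)/4 = (j-1)/4 + 2^m := by omega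
  have e2 : (j + 2^(n-1) - 1)%4 = (j-1)%4 := by omega
  have e3 : (i + 2^(n-1) - 1)/4 = (i-1)/4 + 2^m := by omega
  have e4 : (i + 2^(n-1) - 1)%4 = (i-1)%4 := by omega
  rw [Ment_def i j, Ments_def i j, Ment_def i (j + 2^(n-1)), Ments_def i (j + 2^(n-1)),
    Ment_def (i + 2^(n-1)) j, Ments_def (i + 2^(n-1)) j, e1, e2, e3, e4]
  have E1 : ((((j-1)/4 + 2^m : ℕ)) : ℤ) - (((i-1)/4 : ℕ) : ℤ)
      = ((((j-1)/4 : ℕ) : ℤ) - (((i-1)/4 : ℕ) : ℤ)) + 2^m := by push_cast; ring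
  have E2 : (((j-1)/4 : ℕ) : ℤ) - ((((i-1)/4 + 2^m : ℕ)) : ℤ)
      = ((((j-1)/4 : ℕ) : ℤ) - (((i-1)/4 : ℕ) : ℤ)) - 2^m := by push_cast; ring
  rw [E1, E2]
  set d : ℤ := (((j-1)/4 : ℕ) : ℤ) - (((i-1)/4 : ℕ) : ℤ) with hdd
  have hd : d.natAbs < 2^m := by
    have hiq : (i-1)/4 < 2^m := by omega
    have hjq : (j-1)/4 < 2^m := by omega
    omega
  obtain ⟨⟨s1, s2⟩, hfull, hflip⟩ := blockSC_shift m hm1 d hd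
  constructor
  · -- |j - i| ≠ p/4
    intro hne
    by_cases hab : (i-1) % 4 = (j-1) % 4
    · have hji : (j:ℤ) - i = 4 * d := by omega
      have hd0 : d ≠ 0 := by omega
      have hdne : d.natAbs ≠ 2^(m-1) := by omega
      obtain ⟨c1, c2⟩ := hfull hd0 hdne
      rw [c1, c2]
      exact ⟨⟨rfl, rfl⟩, rfl, rfl⟩
    · simp only [if_neg hab, s1, s2, add_zero]
      refine ⟨⟨?_, ?_⟩, ?_, ?_⟩ <;> trivial
  · -- |j - i| = p/4
    intro heq
    have hab : (i-1) % 4 = (j-1) % 4 := by omega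
    have hji : (j:ℤ) - i = 4 * d := by omega
    have hdabs : d.natAbs = 2^(m-1) := by omega
    obtain ⟨c1, c2⟩ := hflip hdabs
    have hr : (i-1) % 4 < 4 := Nat.mod_lt _ (by norm_num)
    have h4 : M4 ((i-1) % 4 + 1) ((j-1) % 4 + 1) = 0 := by rw [← hab]; exact M4_diag _ hr
    have h4s : M4s ((i-1) % 4 + 1) ((j-1) % 4 + 1) = 0 := by rw [← hab]; exact M4s_diag _ hr
    simp only [if_pos hab, h4, h4s, c1, c2, mul_zero, zero_add]
    norm_num
end

section
/- For all p = 2^n with n ≥ 3 and all i from 1 to p/2, M_p[i, i+p/2] = M_p^*[i+p/2, i] = n+1 and M_p[i+p/2, i] = M_p^*[i, i+p/2] = −(n+1). -/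
lemma fact_pow (m : ℕ) : ((2:ℕ)^m).factorization 2 = m := by
  simp [Nat.Prime.factorization_pow Nat.prime_two]

lemma natAbs_pow2 (m : ℕ) : ((2:ℤ)^m).natAbs = 2^m := by
  simp [Int.natAbs_pow]

lemma blockSC_pos (m : ℕ) : (blockSC ((2:ℤ)^m)).2 = (m:ℤ) + 4 := by
  match m with
  | 0 => norm_num [blockSC]
  | 1 => norm_num [blockSC, natAbs_pow2, fact_pow]
  | (m+2) =>
    have h0 : ((2:ℤ)^(m+2)) % 4 = 0 := by
      have : (4:ℤ) ∣ 2^(m+2) := ⟨2^m, by ring⟩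
      omega
    have hx : ((2:ℤ)^(m+2)).natAbs.factorization 2 = m + 2 := by
      rw [natAbs_pow2, fact_pow]
    have hne : ((2:ℤ)^(m+2)) ≠ 0 := by positivity
    simp only [blockSC, hx, hne, if_false, h0]
    norm_num

lemma blockSC_neg (m : ℕ) : (blockSC (-(2:ℤ)^m)).2 = -((m:ℤ) + 4) := by
  match m with
  | 0 => norm_num [blockSC]
  | 1 =>
    have hx : ((-(2:ℤ)^1)).natAbs.factorization 2 = 1 := by norm_num [fact_pow]
    norm_num [blockSC, hx]
  | (m+2) =>
    have h0 : (-(2:ℤ)^(m+2)) % 4 = 0 := by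
      have : (4:ℤ) ∣ 2^(m+2) := ⟨2^m, by ring⟩
      omega
    have hx : ((-(2:ℤ)^(m+2))).natAbs.factorization 2 = m + 2 := by
      rw [Int.natAbs_neg, natAbs_pow2, fact_pow]
    have hne : (-(2:ℤ)^(m+2)) ≠ 0 := neg_ne_zero.mpr (by positivity)
    have hdiv : (-(2:ℤ)^(m+2)) / 2^(m+2) = -1 := by
      rw [Int.neg_ediv_of_dvd dvd_rfl, Int.ediv_self (by positivity)]
    simp only [blockSC, hx, hne, if_false, h0]
    rw [hdiv]
    norm_num

lemma Ment_eq (i m : ℕ) (hi : 1 ≤ i) :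
    Ment i (i + 2^(m+2)) = (m:ℤ) + 4 ∧ Ment (i + 2^(m+2)) i = -((m:ℤ) + 4) ∧
    Ments i (i + 2^(m+2)) = -((m:ℤ) + 4) ∧ Ments (i + 2^(m+2)) i = (m:ℤ) + 4 := by
  have h4 : (2:ℕ)^(m+2) = 4 * 2^m := by ring
  have hj1 : i + 2^(m+2) - 1 = (i-1) + 4 * 2^m := by omega
  have hdiv : ((i + 2^(m+2) - 1)) / 4 = (i-1)/4 + 2^m := by
    rw [hj1, Nat.add_mul_div_left _ _ (by norm_num)]
  have hmod : (i + 2^(m+2) - 1) % 4 = (i-1) % 4 := by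
    rw [hj1, Nat.add_mul_mod_self_left]
  have hd1 : ((((i-1)/4 + 2^m : ℕ)) : ℤ) - (((i-1)/4 : ℕ) : ℤ) = (2:ℤ)^m := by
    push_cast; ring
  have hd2 : (((i-1)/4 : ℕ) : ℤ) - ((((i-1)/4 + 2^m : ℕ)) : ℤ) = -(2:ℤ)^m := by
    push_cast; ring
  have hr : (i-1) % 4 < 4 := Nat.mod_lt _ (by norm_num)
  have e1 := M4_diag _ hr
  have e2 := M4s_diag _ hr
  refine ⟨?_, ?_, ?_, ?_⟩ <;>
    simp only [Ment, Ments, hdiv, hmod, hd1, hd2, e1, e2, if_pos rfl, mul_zero,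
      zero_add, blockSC_pos, blockSC_neg] <;> simp

/-- For all `p = 2^n` with `n ≥ 3` and all `i` from 1 to `p/2`,
`M_p[i, i+p/2] = M_p*[i+p/2, i] = n+1` and `M_p[i+p/2, i] = M_p*[i, i+p/2] = −(n+1)`. -/
theorem stmt3 (n p : ℕ) (hn : 3 ≤ n) (hp : p = 2^n)
    (i : ℕ) (hi1 : 1 ≤ i) (hi2 : i ≤ p/2) :
    (Mp n i (i + p/2) = (n:ℤ) + 1 ∧ Mps n (i + p/2) i = (n:ℤ) + 1) ∧
    (Mp n (i + p/2) i = -((n:ℤ) + 1) ∧ Mps n i (i + p/2) = -((n:ℤ) + 1)) := by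
  obtain ⟨m, rfl⟩ : ∃ m, n = m + 3 := ⟨n - 3, by omega⟩
  subst hp
  have h2 : (2:ℕ)^(m+3) = 2 * 2^(m+2) := by ring
  have hhalf : (2:ℕ)^(m+3) / 2 = 2^(m+2) := by omega
  rw [hhalf] at hi2 ⊢
  have hrange : 1 ≤ i ∧ i ≤ 2^(m+3) ∧ 1 ≤ i + 2^(m+2) ∧ i + 2^(m+2) ≤ 2^(m+3) := by
    omega
  have hrange2 : 1 ≤ i + 2^(m+2) ∧ i + 2^(m+2) ≤ 2^(m+3) ∧ 1 ≤ i ∧ i ≤ 2^(m+3) := by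
    omega
  obtain ⟨E1, E2, E3, E4⟩ := Ment_eq i m hi1
  rw [Mp, Mps, Mp, Mps, if_pos hrange, if_pos hrange, if_pos hrange2, if_pos hrange2,
    E1, E2, E3, E4]
  refine ⟨⟨?_, ?_⟩, ?_, ?_⟩ <;> push_cast <;> ring
end

section
/- For each p = 2^n with n ≥ 2 and each k from 1 to p, the map σ_{p,k} is a bijection from the set {1, 2, …, p} ∖ {k} onto itself. -/
/-
Write `{1,…,2P}` as two copies of `{1,…,P}`. Off the two copies of `k₀` (the residue of `k`),
`σ_{2P,k}` acts as `σ_{P,k₀}` on the residue while swapping the halves, and it fixes the copy of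
`k₀` other than `k`; so a bijection of `{1,…,P} ∖ {k₀}` doubles to one of `{1,…,2P} ∖ {k}`, and
induction from the table for `p = 4` gives the claim. On a finite set, surjectivity suffices.
-/

open Set

/-- With `f = σ_{P,k₀}` and `{k, m} = {k₀, k₀ + P}`, this is `σ_{2P,k}`. -/
def doubleMap (P m : ℕ) (f : ℕ → ℕ) (i : ℕ) : ℕ :=
  if i = m then i else if i ≤ P then f i + P else f (i - P)

theorem sigma_add_three_of_le {n k : ℕ} (hk : k ≤ 2 ^ (n + 2)) :
    sigma (n + 3) k = doubleMap (2 ^ (n + 2)) (k + 2 ^ (n + 2)) (sigma (n + 2) k) := by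
  funext i
  simp only [sigma, doubleMap, if_pos hk]

theorem sigma_add_three_of_lt {n k : ℕ} (hk : 2 ^ (n + 2) < k) :
    sigma (n + 3) k =
      doubleMap (2 ^ (n + 2)) (k - 2 ^ (n + 2)) (sigma (n + 2) (k - 2 ^ (n + 2))) := by
  funext i
  simp only [sigma, doubleMap, if_neg hk.not_ge]

theorem bijOn_doubleMap {P k₀ k m : ℕ} {f : ℕ → ℕ} (hk₀ : k₀ ∈ Icc 1 P)
    (hf : BijOn f (Icc 1 P \ {k₀}) (Icc 1 P \ {k₀}))
    (hkm : k = k₀ ∧ m = k₀ + P ∨ k = k₀ + P ∧ m = k₀) :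
    BijOn (doubleMap P m f) (Icc 1 (2 * P) \ {k}) (Icc 1 (2 * P) \ {k}) := by
  have hmem : ∀ i, i ∈ Icc 1 P \ {k₀} ↔ 1 ≤ i ∧ i ≤ P ∧ i ≠ k₀ := by
    simp [and_assoc]
  have hmaps : ∀ i, 1 ≤ i → i ≤ P → i ≠ k₀ → 1 ≤ f i ∧ f i ≤ P ∧ f i ≠ k₀ :=
    fun i h₁ h₂ h₃ => (hmem _).1 (hf.mapsTo ((hmem i).2 ⟨h₁, h₂, h₃⟩))
  have hsurj : ∀ j, 1 ≤ j → j ≤ P → j ≠ k₀ → ∃ i, (1 ≤ i ∧ i ≤ P ∧ i ≠ k₀) ∧ f i = j :=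
    fun j h₁ h₂ h₃ => by
      obtain ⟨i, hi, rfl⟩ := hf.surjOn ((hmem j).2 ⟨h₁, h₂, h₃⟩)
      exact ⟨i, (hmem i).1 hi, rfl⟩
  simp only [mem_Icc] at hk₀
  have hmapsTo : MapsTo (doubleMap P m f) (Icc 1 (2 * P) \ {k}) (Icc 1 (2 * P) \ {k}) := by
    rintro i ⟨⟨hi₁, hi₂⟩, hik⟩
    simp only [mem_singleton_iff] at hik
    simp only [doubleMap, mem_sdiff, mem_Icc, mem_singleton_iff]
    split_ifs with him hiP
    · omega
    · have := hmaps i hi₁ hiP (by omega); omega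
    · have := hmaps (i - P) (by omega) (by omega) (by omega); omega
  refine (((finite_Icc 1 (2 * P)).sdiff).surjOn_iff_bijOn_of_mapsTo hmapsTo).1 ?_
  rintro j ⟨⟨hj₁, hj₂⟩, hjk⟩
  simp only [mem_singleton_iff] at hjk
  simp only [mem_image, mem_sdiff, mem_Icc, mem_singleton_iff]
  by_cases hjm : j = m
  · exact ⟨j, ⟨⟨hj₁, hj₂⟩, hjk⟩, if_pos hjm⟩
  by_cases hjP : j ≤ P
  · obtain ⟨i, hi, rfl⟩ := hsurj j hj₁ hjP (by omega)
    refine ⟨i + P, ⟨⟨by omega, by omega⟩, by omega⟩, ?_⟩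
    simp only [doubleMap, if_neg (show i + P ≠ m by omega), if_neg (show ¬i + P ≤ P by omega),
      Nat.add_sub_cancel]
  · obtain ⟨i, hi, hij⟩ := hsurj (j - P) (by omega) (by omega) (by omega)
    refine ⟨i, ⟨⟨by omega, by omega⟩, by omega⟩, ?_⟩
    simp only [doubleMap, if_neg (show i ≠ m by omega), if_pos hi.2.1]
    omega

theorem bijOn_sigma_two {k : ℕ} (hk : k ∈ Icc 1 4) :
    BijOn (sigma 2 k) (Icc 1 4 \ {k}) (Icc 1 4 \ {k}) := by
  have hk' : k ∈ Finset.Icc 1 4 := by simpa using hk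
  have hmapsTo : MapsTo (sigma 2 k) (Icc 1 4 \ {k}) (Icc 1 4 \ {k}) := by
    have : ∀ l ∈ Finset.Icc 1 4, ∀ i ∈ Finset.Icc 1 4, i ≠ l →
        sigma 2 l i ∈ Finset.Icc 1 4 ∧ sigma 2 l i ≠ l := by decide
    rintro i ⟨hi, hik⟩
    simpa using this k hk' i (by simpa using hi) hik
  refine (((finite_Icc 1 4).sdiff).surjOn_iff_bijOn_of_mapsTo hmapsTo).1 ?_
  have : ∀ l ∈ Finset.Icc 1 4, ∀ j ∈ Finset.Icc 1 4, j ≠ l →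
      ∃ i ∈ Finset.Icc 1 4, i ≠ l ∧ sigma 2 l i = j := by decide
  rintro j ⟨hj, hjk⟩
  obtain ⟨i, hi, hik, rfl⟩ := this k hk' j (by simpa using hj) hjk
  exact ⟨i, ⟨by simpa using hi, hik⟩, rfl⟩

theorem bijOn_sigma {n k : ℕ} (hn : 2 ≤ n) (hk : k ∈ Icc 1 (2 ^ n)) :
    BijOn (sigma n k) (Icc 1 (2 ^ n) \ {k}) (Icc 1 (2 ^ n) \ {k}) := by
  induction n, hn using Nat.le_induction generalizing k with
  | base => exact bijOn_sigma_two hk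
  | succ n hn ih =>
    obtain ⟨n, rfl⟩ := Nat.exists_eq_add_of_le' hn
    rw [pow_succ'] at hk ⊢
    simp only [mem_Icc] at hk
    rcases le_or_gt k (2 ^ (n + 2)) with hkP | hkP
    · rw [sigma_add_three_of_le hkP]
      exact bijOn_doubleMap ⟨hk.1, hkP⟩ (ih ⟨hk.1, hkP⟩) (Or.inl ⟨rfl, rfl⟩)
    · rw [sigma_add_three_of_lt hkP]
      have hk₀ : k - 2 ^ (n + 2) ∈ Icc 1 (2 ^ (n + 2)) := ⟨by omega, by omega⟩
      exact bijOn_doubleMap hk₀ (ih hk₀) (Or.inr ⟨by omega, rfl⟩)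

/-- For each `p = 2^n` with `n ≥ 2` and each `k` from 1 to `p`,
`σ_{p,k}` is a bijection from `{1,…,p} \ {k}` onto itself. -/
theorem stmt4 (n p : ℕ) (hn : 2 ≤ n) (hp : p = 2^n) (k : ℕ) (hk1 : 1 ≤ k) (hk2 : k ≤ p) :
    Set.BijOn (sigma n k) (Set.Icc 1 p \ {k}) (Set.Icc 1 p \ {k}) := by
  subst hp
  exact bijOn_sigma hn ⟨hk1, hk2⟩
end

section
/- For all p = 2^n with n ≥ 3 and all distinct i and j from 1 to p: j = i + p/2 if and only if σ_{p,i}(j) = i + p/2, and j = i − p/2 if and only if σ_{p,i}(j) = i − p/2. -/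
lemma sig_key : ∀ n k i, 1 ≤ k → k ≤ 2^(n+2) → 1 ≤ i → i ≤ 2^(n+2) → i ≠ k →
    1 ≤ sigma (n+2) k i ∧ sigma (n+2) k i ≤ 2^(n+2) ∧ sigma (n+2) k i ≠ k := by
  intro n
  induction n with
  | zero =>
    intro k i hk1 hk2 hi1 hi2 hik
    interval_cases k <;> interval_cases i <;> simp_all [sigma, sigma4]
  | succ m ih =>
    intro k i hk1 hk2 hi1 hi2 hik
    have hP : (2:ℕ)^(m+3) = 2^(m+2) + 2^(m+2) := by ring
    have hP2 : (2:ℕ)^(m+1+2) = 2^(m+2) + 2^(m+2) := hP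
    show 1 ≤ sigma (m+3) k i ∧ _
    simp only [sigma]
    by_cases hkP : k ≤ 2^(m+2)
    · by_cases h1 : i = k + 2^(m+2)
      · simp only [hkP, h1, if_true]
        omega
      · by_cases h2 : i ≤ 2^(m+2)
        · have := ih k i hk1 hkP hi1 h2 hik
          simp only [hkP, h1, h2, if_true, if_false]
          omega
        · have := ih k (i - 2^(m+2)) hk1 hkP (by omega) (by omega) (by omega)
          simp only [hkP, h1, h2, if_true, if_false]
          omega
    · by_cases h1 : i = k - 2^(m+2)
      · simp only [hkP, h1, if_false, if_true]
        omega
      · by_cases h2 : i ≤ 2^(m+2)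
        · have := ih (k - 2^(m+2)) i (by omega) (by omega) hi1 h2 (by omega)
          simp only [hkP, h1, h2, if_true, if_false]
          omega
        · have := ih (k - 2^(m+2)) (i - 2^(m+2)) (by omega) (by omega) (by omega) (by omega) (by omega)
          simp only [hkP, h1, h2, if_true, if_false]
          omega

/-- For all `p = 2^n` with `n ≥ 3` and all distinct `i, j` from 1 to `p`:
`j = i + p/2 ↔ σ_{p,i}(j) = i + p/2`, and `j = i − p/2 ↔ σ_{p,i}(j) = i − p/2`. -/
theorem stmt7 (n p : ℕ) (hn : 3 ≤ n) (hp : p = 2^n)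
    (i j : ℕ) (hi1 : 1 ≤ i) (hi2 : i ≤ p) (hj1 : 1 ≤ j) (hj2 : j ≤ p) (hij : i ≠ j) :
    (j = i + p/2 ↔ sigma n i j = i + p/2) ∧
    (j + p/2 = i ↔ sigma n i j + p/2 = i) := by
  obtain ⟨m, rfl⟩ : ∃ m, n = m + 3 := ⟨n - 3, by omega⟩
  subst hp
  have hP : (2:ℕ)^(m+3) = 2^(m+2) + 2^(m+2) := by ring
  have hhalf : (2:ℕ)^(m+3) / 2 = 2^(m+2) := by omega
  simp only [sigma, hhalf]
  by_cases hkP : i ≤ 2^(m+2)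
  · by_cases h1 : j = i + 2^(m+2)
    · rw [if_pos hkP, if_pos h1]
      omega
    · by_cases h2 : j ≤ 2^(m+2)
      · have := sig_key m i j hi1 hkP hj1 h2 (Ne.symm hij)
        rw [if_pos hkP, if_neg h1, if_pos h2]
        omega
      · have := sig_key m i (j - 2^(m+2)) hi1 hkP (by omega) (by omega) (by omega)
        rw [if_pos hkP, if_neg h1, if_neg h2]
        omega
  · by_cases h1 : j = i - 2^(m+2)
    · rw [if_neg hkP, if_pos h1]
      omega
    · by_cases h2 : j ≤ 2^(m+2)
      · have := sig_key m (i - 2^(m+2)) j (by omega) (by omega) hj1 h2 (by omega)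
        rw [if_neg hkP, if_neg h1, if_pos h2]
        omega
      · have := sig_key m (i - 2^(m+2)) (j - 2^(m+2)) (by omega) (by omega) (by omega) (by omega) (by omega)
        rw [if_neg hkP, if_neg h1, if_neg h2]
        omega
end

section
/- For each p = 2^n with n ≥ 2, each k from 1 to p, and all i and j from 1 to p distinct from k, M_p[i,j] = M_p^*[σ_{p,k}(i), σ_{p,k}(j)]. In particular, the edge-weighted digraphs with adjacency matrices M_p and M_p^* are hypomorphic under the mappings σ_{p,k}. -/
lemma odd_mul_pow_emod (x : ℕ) (y : ℤ) (hy : y % 2 = 1) : (y * 2^x) % 2^(x+1) = 2^x := by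
  obtain ⟨t, ht⟩ : ∃ t, y = 2*t+1 := ⟨y/2, by omega⟩
  have h1 : y * 2^x = 2^x + (2^(x+1)) * t := by rw [ht]; ring
  rw [h1, Int.add_mul_emod_self_left]
  have h2 : (2:ℤ)^x < 2^(x+1) := by
    have := pow_pos (show (0:ℤ) < 2 by norm_num) x
    rw [pow_succ]; omega
  exact Int.emod_eq_of_lt (by positivity) h2

lemma factorization_odd_mul_pow (x : ℕ) (y : ℤ) (hy : y % 2 = 1) :
    ((y * 2^x).natAbs.factorization 2) = x := by
  have hy0 : y ≠ 0 := by omega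
  have h1 : (y * 2^x).natAbs = y.natAbs * 2^x := by
    rw [Int.natAbs_mul]; norm_num [Int.natAbs_pow]
  rw [h1, Nat.factorization_mul (by positivity) (by positivity)]
  have h2 : (y.natAbs).factorization 2 = 0 := by
    apply Nat.factorization_eq_zero_of_not_dvd
    omega
  have h3 : ((2^x : ℕ)).factorization 2 = x := by
    rw [Nat.Prime.factorization_pow Nat.prime_two]
    simp
  simp only [Finsupp.coe_add, Pi.add_apply, h2, h3, Nat.zero_add]

lemma blockSC_form (x : ℕ) (y : ℤ) (hy : y % 2 = 1) :
    blockSC (y * 2^x) = (if x = 0 then -1 else 1,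
      if y % 4 = 1 then (x:ℤ)+4 else -((x:ℤ)+4)) := by
  have hy0 : y ≠ 0 := by omega
  have hd0 : y * 2^x ≠ 0 := by positivity
  have hy4 : y % 4 = 1 ∨ y % 4 = 3 := by omega
  unfold blockSC
  rw [if_neg hd0]
  rcases Nat.eq_zero_or_pos x with hx | hx
  · subst hx
    simp only [pow_zero, mul_one]
    rcases hy4 with h | h <;> simp [h]
  · have h4 : (y * 2^x) % 4 ≠ 1 ∧ (y * 2^x) % 4 ≠ 3 := by
      obtain ⟨x', rfl⟩ : ∃ x', x = x' + 1 := ⟨x-1, by omega⟩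
      rcases Nat.eq_zero_or_pos x' with hx' | hx'
      · subst hx'
        have he : y * 2^(0+1) = 2 * y := by ring
        rw [he]
        have h2 : 2 * y % (2*2) = 2 * (y % 2) := Int.mul_emod_mul_of_pos _ _ (by norm_num)
        norm_num at h2 ⊢
        omega
      · obtain ⟨c, hc⟩ : ∃ c : ℤ, y * 2^(x'+1) = 4 * c := by
          refine ⟨y * 2^(x'-1), ?_⟩
          have : (2:ℤ)^(x'+1) = 4 * 2^(x'-1) := by
            rw [show x'+1 = 2 + (x'-1) by omega, pow_add]; norm_num
          rw [this]; ring
        omega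
    rw [if_neg h4.1, if_neg h4.2]
    rw [factorization_odd_mul_pow x y hy]
    show (if y * 2 ^ x / 2 ^ x % 4 = 1 then ((1:ℤ), (x:ℤ) + 4) else (1, -((x:ℤ) + 4))) = _
    have hdiv : y * 2^x / 2^x = y := Int.mul_ediv_cancel _ (by positivity)
    rw [hdiv]
    have hxx : x ≠ 0 := by omega
    rcases hy4 with h | h <;> simp [h, hxx]

lemma blockSC_sign (d : ℤ) : (blockSC d).1 = if d % 2 = 0 then 1 else -1 := by
  have h24 : d % 4 % 2 = d % 2 := Int.emod_emod_of_dvd d (by norm_num)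
  unfold blockSC
  by_cases h0 : d = 0
  · simp [h0]
  rw [if_neg h0]
  by_cases h1 : d % 4 = 1
  · rw [if_pos h1]; have : d % 2 = 1 := by omega
    simp [this]
  rw [if_neg h1]
  by_cases h3 : d % 4 = 3
  · rw [if_pos h3]; have : d % 2 = 1 := by omega
    simp [this]
  rw [if_neg h3]
  have : d % 2 = 0 := by omega
  simp only [this, if_pos rfl]
  split <;> rfl

lemma e_rep {d : ℤ} {e : ℕ} (h : d % 2^(e+1) = 2^e) : ∃ y : ℤ, y % 2 = 1 ∧ d = y * 2^e := by
  refine ⟨2*(d / 2^(e+1)) + 1, by omega, ?_⟩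
  have h2 := Int.mul_ediv_add_emod d (2^(e+1))
  rw [h] at h2
  have h3 : (2:ℤ)^(e+1) = 2*2^e := by rw [pow_succ]; ring
  linear_combination (d / 2^(e+1)) * h3 - h2

lemma blockSC_neg_s11 (d : ℤ) : (blockSC (-d)).2 = -(blockSC d).2 := by
  by_cases h0 : d = 0
  · simp [h0, blockSC]
  obtain ⟨x, y, hy, hd⟩ : ∃ (x : ℕ) (y : ℤ), y % 2 = 1 ∧ d = y * 2^x := by
    obtain ⟨x, m, hm2, hm⟩ := Nat.exists_eq_pow_mul_and_not_dvd (Int.natAbs_ne_zero.mpr h0) 2 (by norm_num)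
    rcases Int.natAbs_eq d with he | he
    · exact ⟨x, m, by omega, by rw [he, hm]; push_cast; ring⟩
    · exact ⟨x, -m, by omega, by rw [he, hm]; push_cast; ring⟩
  rw [hd, show -(y * 2^x) = (-y) * 2^x by ring,
    blockSC_form x y hy, blockSC_form x (-y) (by omega)]
  have : y % 4 = 1 ∨ y % 4 = 3 := by omega
  rcases this with h | h
  · have h' : (-y) % 4 = 3 := by omega
    simp [h, h']
  · have h' : (-y) % 4 = 1 := by omega
    simp [h, h']

lemma e_unique {d : ℤ} {a b : ℕ} (ha : d % 2^(a+1) = 2^a) (hb : d % 2^(b+1) = 2^b) : a = b := by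
  have key : ∀ a b : ℕ, a < b → d % 2^(a+1) = 2^a → d % 2^(b+1) = 2^b → False := by
    intro a b h ha hb
    have h1 : (2:ℤ)^(a+1) ∣ 2^(b+1) := pow_dvd_pow 2 (by omega)
    have h2 : d % 2^(b+1) % 2^(a+1) = d % 2^(a+1) := Int.emod_emod_of_dvd d h1
    rw [hb, ha] at h2
    have h3 : (2:ℤ)^b % 2^(a+1) = 0 := Int.emod_eq_zero_of_dvd (pow_dvd_pow 2 (by omega))
    rw [h3] at h2
    have h4 : (0:ℤ) < 2^a := by positivity
    omega
  rcases lt_trichotomy a b with h | h | h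
  · exact absurd (key a b h ha hb) (by simp)
  · exact h
  · exact absurd (key b a h hb ha) (by simp)

lemma blockSC_flip (a : ℕ) (d d' : ℤ) (h : d % 2^(a+1) = 2^a)
    (h' : d' % 2^(a+2) = (d + 2^(a+1)) % 2^(a+2)) : (blockSC d').2 = -(blockSC d).2 := by
  obtain ⟨y, hy, rfl⟩ := e_rep h
  have hda : (y * 2^a + 2^(a+1)) = (y + 2) * 2^a := by ring
  have h'' : d' % 2^(a+1) = 2^a := by
    have h1 : d' % 2^(a+2) % 2^(a+1) = d' % 2^(a+1) := Int.emod_emod_of_dvd d' (pow_dvd_pow 2 (by omega))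
    have h2 : (y * 2^a + 2^(a+1)) % 2^(a+2) % 2^(a+1) = (y * 2^a + 2^(a+1)) % 2^(a+1) :=
      Int.emod_emod_of_dvd _ (pow_dvd_pow 2 (by omega))
    rw [h'] at h1
    rw [h2] at h1
    rw [← h1]
    have : (y * 2^a + 2^(a+1)) % 2^(a+1) = (y * 2^a) % 2^(a+1) := by
      simp [Int.add_mul_emod_self_left]
    rw [this, odd_mul_pow_emod a y hy]
  obtain ⟨y', hy', hd'⟩ := e_rep h''
  have hmod : y' % 4 = (y + 2) % 4 := by
    have h1 : (2:ℤ)^a * (y' % 4) = 2^a * ((y+2) % 4) := by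
      have e1 : (2:ℤ)^a * y' % (2^a * 4) = 2^a * (y' % 4) := Int.mul_emod_mul_of_pos _ _ (by positivity)
      have e2 : (2:ℤ)^a * (y+2) % (2^a * 4) = 2^a * ((y+2) % 4) := Int.mul_emod_mul_of_pos _ _ (by positivity)
      have e3 : (2:ℤ)^a * 4 = 2^(a+2) := by rw [pow_add]; ring
      have e4 : (2:ℤ)^a * y' = d' := by rw [hd']; ring
      have e5 : (2:ℤ)^a * (y+2) = y * 2^a + 2^(a+1) := by rw [pow_succ]; ring
      rw [e3, e4] at e1
      rw [e3, e5] at e2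
      rw [← e1, ← e2]
      exact h'
    have : (2:ℤ)^a ≠ 0 := by positivity
    exact mul_left_cancel₀ this h1
  rw [hd', blockSC_form a y hy, blockSC_form a y' hy']
  have : y % 4 = 1 ∨ y % 4 = 3 := by omega
  rcases this with h4 | h4
  · have h4' : y' % 4 = 3 := by omega
    simp [h4, h4']
  · have h4' : y' % 4 = 1 := by omega
    simp [h4, h4']

lemma neg_pow_emod (a : ℕ) : (-2^a : ℤ) % 2^(a+1) = 2^a := by
  rw [show (-2^a:ℤ) = 2^a + 2^(a+1) * (-1) by rw [pow_succ]; ring, Int.add_mul_emod_self_left]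
  exact Int.emod_eq_of_lt (by positivity) (by rw [pow_succ]; nlinarith [pow_pos (show (0:ℤ)<2 by norm_num) a])

lemma lemA_core (a b : ℕ) (hab : a < b) (u v w : ℤ)
    (ha : (u - w) % 2^(a+1) = 2^a) (hb : (v - w) % 2^(b+1) = 2^b) :
    (blockSC (2^(a+1) - 2^(b+1) + 2*(v % 2^(b+1)) - 2*(u % 2^(a+1)) - v + u)).2
      = -(blockSC (v - u)).2 := by
  have hvw : (v - w) % 2^(a+1) = 0 := by
    have h1 : (v - w) % 2^(b+1) % 2^(a+1) = (v - w) % 2^(a+1) :=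
      Int.emod_emod_of_dvd _ (pow_dvd_pow 2 (by omega))
    rw [hb] at h1
    rw [← h1]
    exact Int.emod_eq_zero_of_dvd (pow_dvd_pow 2 (by omega))
  have hd : (v - u) % 2^(a+1) = 2^a := by
    have h1 : (v - u) % 2^(a+1) = ((v-w) % 2^(a+1) - (u-w) % 2^(a+1)) % 2^(a+1) := by
      rw [← Int.sub_emod]; ring_nf
    rw [h1, hvw, ha]
    simpa using neg_pow_emod a
  apply blockSC_flip a _ _ hd
  have hv : v % 2^(b+1) = v - 2^(b+1) * (v / 2^(b+1)) := Int.emod_def v _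
  have hu : u % 2^(a+1) = u - 2^(a+1) * (u / 2^(a+1)) := Int.emod_def u _
  have hba : (2:ℤ)^(b+1) = 2^(a+2) * 2^(b-a-1) := by
    rw [← pow_add]; congr 1; omega
  have hN : (2:ℤ)^(a+2) = 2 * 2^(a+1) := by rw [pow_succ]; ring
  have key : (2:ℤ)^(a+1) - 2^(b+1) + 2*(v % 2^(b+1)) - 2*(u % 2^(a+1)) - v + u
      = (v - u + 2^(a+1)) + 2^(a+2) * (u/2^(a+1) - 2^(b-a-1)*(1+2*(v/2^(b+1)))) := by
    rw [hv, hu]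
    linear_combination ((-1:ℤ) - 2*(v/2^(b+1))) * hba + (u/2^(a+1)) * hN
  rw [key, Int.add_mul_emod_self_left]

lemma lemA (a b : ℕ) (u v w : ℤ)
    (ha : (u - w) % 2^(a+1) = 2^a) (hb : (v - w) % 2^(b+1) = 2^b) :
    (blockSC (2^(a+1) - 2^(b+1) + 2*(v % 2^(b+1)) - 2*(u % 2^(a+1)) - v + u)).2
      = -(blockSC (v - u)).2 := by
  rcases lt_trichotomy a b with hab | rfl | hab
  · exact lemA_core a b hab u v w ha hb
  · -- a = b : expression equals -(v-u)
    have h0 : (v - u) % 2^(a+1) = 0 := by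
      have h1 : (v - u) % 2^(a+1) = ((v-w) % 2^(a+1) - (u-w) % 2^(a+1)) % 2^(a+1) := by
        rw [← Int.sub_emod]; ring_nf
      rw [h1, hb, ha]; simp
    have h1 : v % 2^(a+1) = u % 2^(a+1) :=
      Int.modEq_iff_dvd.mpr (by rw [show u - v = -(v-u) by ring]; exact dvd_neg.mpr (Int.dvd_of_emod_eq_zero h0))
    rw [show (2:ℤ)^(a+1) - 2^(a+1) + 2*(v % 2^(a+1)) - 2*(u % 2^(a+1)) - v + u = -(v-u) by rw [h1]; ring,
      blockSC_neg_s11]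
  · have core := lemA_core b a hab v u w hb ha
    have hE : (2:ℤ)^(b+1) - 2^(a+1) + 2*(u % 2^(a+1)) - 2*(v % 2^(b+1)) - u + v
        = -((2:ℤ)^(a+1) - 2^(b+1) + 2*(v % 2^(b+1)) - 2*(u % 2^(a+1)) - v + u) := by ring
    rw [hE] at core
    rw [blockSC_neg_s11] at core
    have huv : (blockSC (u - v)).2 = -(blockSC (v-u)).2 := by
      rw [show u - v = -(v-u) by ring, blockSC_neg_s11]
    omega

lemma sigma_succ (m k i : ℕ) : sigma (m+3) k i =
    if k ≤ 2^(m+2) then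
      if i = k + 2^(m+2) then i
      else if i ≤ 2^(m+2) then sigma (m+2) k i + 2^(m+2)
      else sigma (m+2) k (i - 2^(m+2))
    else
      if i = k - 2^(m+2) then i
      else if i ≤ 2^(m+2) then sigma (m+2) (k - 2^(m+2)) i + 2^(m+2)
      else sigma (m+2) (k - 2^(m+2)) (i - 2^(m+2)) := rfl

lemma e_lt {d : ℤ} {e n : ℕ} (h : d % 2^(e+1) = 2^e) (hlo : -2^n < d) (hhi : d < 2^n) :
    e < n := by
  by_contra hc
  push_neg at hc
  have h1 : (2:ℤ)^n ≤ 2^e := pow_le_pow_right₀ (by norm_num) hc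
  have h2 : (2:ℤ)^(e+1) = 2*2^e := by rw [pow_succ]; ring
  rcases le_or_gt 0 d with hd | hd
  · have h3 : d % 2^(e+1) = d := Int.emod_eq_of_lt hd (by omega)
    omega
  · have hb1 : (0:ℤ) ≤ d + 2^(e+1) := by omega
    have hb2 : d + 2^(e+1) < 2^(e+1) := by omega
    have h3 : d % 2^(e+1) = d + 2^(e+1) := by
      conv_lhs => rw [show d = (d + 2^(e+1)) + 2^(e+1)*(-1) by ring]
      rw [Int.add_mul_emod_self_left]
      exact Int.emod_eq_of_lt hb1 hb2
    omega

lemma emod_add_pow_mul {s E : ℕ} (h : s ≤ E) (d c : ℤ) :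
    (d + 2^E * c) % 2^s = d % 2^s := by
  obtain ⟨t, ht⟩ : (2:ℤ)^s ∣ 2^E := pow_dvd_pow 2 h
  rw [ht, mul_assoc, Int.add_mul_emod_self_left]

lemma neg_pow_emod' (a : ℕ) : (-2^a : ℤ) % 2^(a+1) = 2^a := by
  rw [show (-2^a:ℤ) = 2^a + 2^(a+1) * (-1) by rw [pow_succ]; ring, Int.add_mul_emod_self_left]
  exact Int.emod_eq_of_lt (by positivity)
    (by rw [pow_succ]; nlinarith [pow_pos (show (0:ℤ)<2 by norm_num) a])

lemma fixed_case (m i : ℕ) (h1 : 1 ≤ i) (h2 : i ≤ 2^(m+3)) :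
    (i:ℤ) = 4*(2^(m+1) - 2^(m+1) + 2*((((i:ℤ)-1)/4) % 2^(m+1)) - ((i:ℤ)-1)/4)
      + ((i:ℤ)-1)%4 + 1 := by
  have h4 : ((2:ℤ))^(m+3) = 4*2^(m+1) := by
    rw [show m+3 = (m+1)+2 by omega, pow_add]; ring
  have hi : (i:ℤ) ≤ 2^(m+3) := by
    have : (i:ℤ) ≤ ((2^(m+3) : ℕ) : ℤ) := by exact_mod_cast h2
    simpa using this
  have hb1 : 0 ≤ ((i:ℤ)-1)/4 := by omega
  have hb2 : ((i:ℤ)-1)/4 < 2^(m+1) := by omega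
  rw [Int.emod_eq_of_lt hb1 hb2]
  omega

lemma sigma_eq : ∀ m : ℕ, ∀ k i e : ℕ, 1 ≤ k → k ≤ 2^(m+2) → 1 ≤ i → i ≤ 2^(m+2) → i ≠ k →
    ((i:ℤ) - (k:ℤ)) % 2^(e+1) = 2^e →
    (sigma (m+2) k i : ℤ) =
      if 2 ≤ e then
        4*(2^m - 2^(e-1) + 2*((((i:ℤ)-1)/4) % 2^(e-1)) - ((i:ℤ)-1)/4) + ((i:ℤ)-1)%4 + 1
      else 4*(2^m - 1 - ((i:ℤ)-1)/4) + (sigma4 ((k-1)%4+1) ((i-1)%4+1) : ℤ) := by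
  intro m
  induction m with
  | zero =>
    intro k i e hk1 hk2 hi1 hi2 hik he
    norm_num at hk2 hi2
    have he2 : e < 2 := e_lt he (by omega) (by omega)
    rw [if_neg (by omega)]
    interval_cases i <;> interval_cases k <;> first | (exact absurd rfl hik) | decide
  | succ m ih =>
    intro k i e hk1 hk2 hi1 hi2 hik he
    have hP3 : (2:ℤ)^(m+3) = 2 * 2^(m+2) := by rw [pow_succ]; ring
    have hP2 : (2:ℤ)^(m+2) = 4 * 2^m := by rw [show m+2 = m+2 from rfl, pow_add]; ring
    have hP1 : (2:ℤ)^(m+1) = 2 * 2^m := by rw [pow_succ]; ring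
    have hPn : (2^(m+2):ℕ) = 4 * 2^m := by rw [pow_add]; ring
    have hPn3 : (2^(m+3):ℕ) = 2 * 2^(m+2) := by rw [pow_succ]; ring
    have hPX : (2:ℤ)^(m+2+1) = 2 * 2^(m+2) := by rw [pow_succ]; ring
    have hk2' : (k:ℤ) ≤ 2^(m+3) := by
      have : (k:ℤ) ≤ ((2^(m+1+2):ℕ):ℤ) := by exact_mod_cast hk2
      push_cast at this; linarith [this]
    have hi2' : (i:ℤ) ≤ 2^(m+3) := by
      have : (i:ℤ) ≤ ((2^(m+1+2):ℕ):ℤ) := by exact_mod_cast hi2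
      push_cast at this; linarith [this]
    have hk1' : (1:ℤ) ≤ (k:ℤ) := by exact_mod_cast hk1
    have hi1' : (1:ℤ) ≤ (i:ℤ) := by exact_mod_cast hi1
    rw [show m+1+2 = m+3 from rfl, sigma_succ]
    by_cases hk : k ≤ 2^(m+2)
    · have hkc : (k:ℤ) ≤ 2^(m+2) := by
        have : (k:ℤ) ≤ ((2^(m+2):ℕ):ℤ) := by exact_mod_cast hk
        push_cast at this; linarith [this]
      rw [if_pos hk]
      by_cases hfix : i = k + 2^(m+2)
      · rw [if_pos hfix]
        have hik' : (i:ℤ) - k = 2^(m+2) := by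
          have : (i:ℤ) = ((k + 2^(m+2) : ℕ) : ℤ) := by exact_mod_cast congrArg (Nat.cast : ℕ → ℤ) hfix
          push_cast at this; linarith [this]
        have hcan : ((i:ℤ) - (k:ℤ)) % 2^(m+2+1) = 2^(m+2) := by
          rw [hik']
          exact Int.emod_eq_of_lt (by positivity) (by rw [pow_succ]; nlinarith [pow_pos (show (0:ℤ)<2 by norm_num) (m+2)])
        have hem : e = m+2 := e_unique he hcan
        subst hem
        rw [if_pos (show 2 ≤ m+2 by omega), show m+2-1 = m+1 from rfl]
        exact fixed_case m i hi1 (by omega)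
      · rw [if_neg hfix]
        by_cases hiP : i ≤ 2^(m+2)
        · rw [if_pos hiP]
          have hIH := ih k i e hk1 hk hi1 hiP hik he
          have hcast : ((sigma (m+2) k i + 2^(m+2) : ℕ) : ℤ) = (sigma (m+2) k i : ℤ) + 2^(m+2) := by
            push_cast; ring
          rw [hcast, hIH]
          split_ifs with h2e
          · linear_combination hP2 - 4*hP1
          · linear_combination hP2 - 4*hP1
        · rw [if_neg hiP]
          push_neg at hiP
          have hiPc : (2:ℤ)^(m+2) < (i:ℤ) := by
            have : ((2^(m+2):ℕ):ℤ) < (i:ℤ) := by exact_mod_cast hiP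
            push_cast at this; linarith [this]
          have hi'c : ((i - 2^(m+2) : ℕ) : ℤ) = (i:ℤ) - 2^(m+2) := by
            have := Nat.cast_sub (le_of_lt hiP) (R := ℤ)
            rw [this]; push_cast; ring
          have heM : e < m+2 := by
            by_contra hcc
            push_neg at hcc
            have heM2 : e < m+3 := e_lt he (by omega) (by omega)
            have hee : e = m+2 := by omega
            subst hee
            have h3 : ((i:ℤ)-(k:ℤ)) % 2^(m+2+1) = (i:ℤ)-(k:ℤ) :=
              Int.emod_eq_of_lt (by omega) (by omega)
            rw [he] at h3
            exact hfix (by omega)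
          have he' : (((i - 2^(m+2):ℕ):ℤ) - (k:ℤ)) % 2^(e+1) = 2^e := by
            rw [hi'c, show (i:ℤ) - 2^(m+2) - (k:ℤ) = ((i:ℤ) - (k:ℤ)) + 2^(m+2)*(-1) by ring,
              emod_add_pow_mul (by omega), he]
          have hIH := ih k (i - 2^(m+2)) e hk1 hk (by omega) (by omega) (by omega) he'
          rw [hIH]
          have hb : (((i - 2^(m+2):ℕ):ℤ) - 1)/4 = ((i:ℤ)-1)/4 - 2^m := by
            rw [hi'c]; omega
          have hr : ((((i - 2^(m+2):ℕ):ℤ)) - 1)%4 = ((i:ℤ)-1)%4 := by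
            rw [hi'c]; omega
          have hrn : (i - 2^(m+2) - 1)%4 = (i-1)%4 := by omega
          rw [hb, hr, hrn]
          split_ifs with h2e
          · have hmm : (((i:ℤ)-1)/4 - 2^m) % 2^(e-1) = (((i:ℤ)-1)/4) % 2^(e-1) := by
              rw [show ((i:ℤ)-1)/4 - 2^m = ((i:ℤ)-1)/4 + 2^m * (-1) by ring]
              exact emod_add_pow_mul (by omega) _ _
            rw [hmm]
            linear_combination (-4:ℤ) * hP1
          · linear_combination (-4:ℤ) * hP1
    · rw [if_neg hk]
      push_neg at hk
      have hkc : (2:ℤ)^(m+2) < (k:ℤ) := by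
        have : ((2^(m+2):ℕ):ℤ) < (k:ℤ) := by exact_mod_cast hk
        push_cast at this; linarith [this]
      have hk'c : ((k - 2^(m+2) : ℕ) : ℤ) = (k:ℤ) - 2^(m+2) := by
        have := Nat.cast_sub (le_of_lt hk) (R := ℤ)
        rw [this]; push_cast; ring
      have hknr : (k - 2^(m+2) - 1)%4 = (k-1)%4 := by omega
      by_cases hfix : i = k - 2^(m+2)
      · rw [if_pos hfix]
        have hik' : (i:ℤ) - k = -2^(m+2) := by
          have : (i:ℤ) = ((k - 2^(m+2) : ℕ) : ℤ) := by exact_mod_cast congrArg (Nat.cast : ℕ → ℤ) hfix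
          rw [hk'c] at this; linarith [this]
        have hcan : ((i:ℤ) - (k:ℤ)) % 2^(m+2+1) = 2^(m+2) := by
          rw [hik']
          exact neg_pow_emod' (m+2)
        have hem : e = m+2 := e_unique he hcan
        subst hem
        rw [if_pos (show 2 ≤ m+2 by omega), show m+2-1 = m+1 from rfl]
        exact fixed_case m i hi1 (by omega)
      · rw [if_neg hfix]
        have hfix' : i ≠ k - 2^(m+2) := hfix
        by_cases hiP : i ≤ 2^(m+2)
        · rw [if_pos hiP]
          have hiPc : (i:ℤ) ≤ 2^(m+2) := by
            have : (i:ℤ) ≤ ((2^(m+2):ℕ):ℤ) := by exact_mod_cast hiP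
            push_cast at this; linarith [this]
          have heM : e < m+2 := by
            by_contra hcc
            push_neg at hcc
            have heM2 : e < m+3 := e_lt he (by omega) (by omega)
            have hee : e = m+2 := by omega
            subst hee
            have h3 : ((i:ℤ)-(k:ℤ)) % 2^(m+2+1) = (i:ℤ)-(k:ℤ) + 2^(m+2+1) := by
              conv_lhs => rw [show (i:ℤ)-(k:ℤ) = ((i:ℤ)-(k:ℤ)+2^(m+2+1)) + 2^(m+2+1)*(-1) by ring]
              rw [Int.add_mul_emod_self_left]
              exact Int.emod_eq_of_lt (by omega) (by omega)
            rw [he] at h3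
            apply hfix
            omega
          have he' : (((i:ℕ):ℤ) - ((k - 2^(m+2):ℕ):ℤ)) % 2^(e+1) = 2^e := by
            rw [hk'c, show (i:ℤ) - ((k:ℤ) - 2^(m+2)) = ((i:ℤ) - (k:ℤ)) + 2^(m+2)*1 by ring,
              emod_add_pow_mul (by omega), he]
          have hIH := ih (k - 2^(m+2)) i e (by omega) (by omega) hi1 hiP hfix' he'
          have hcast : ((sigma (m+2) (k - 2^(m+2)) i + 2^(m+2) : ℕ) : ℤ)
              = (sigma (m+2) (k - 2^(m+2)) i : ℤ) + 2^(m+2) := by push_cast; ring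
          rw [hcast, hIH, hknr]
          split_ifs with h2e
          · linear_combination hP2 - 4*hP1
          · linear_combination hP2 - 4*hP1
        · rw [if_neg hiP]
          push_neg at hiP
          have hiPc : (2:ℤ)^(m+2) < (i:ℤ) := by
            have : ((2^(m+2):ℕ):ℤ) < (i:ℤ) := by exact_mod_cast hiP
            push_cast at this; linarith [this]
          have hi'c : ((i - 2^(m+2) : ℕ) : ℤ) = (i:ℤ) - 2^(m+2) := by
            have := Nat.cast_sub (le_of_lt hiP) (R := ℤ)
            rw [this]; push_cast; ring
          have he' : (((i - 2^(m+2):ℕ):ℤ) - ((k - 2^(m+2):ℕ):ℤ)) % 2^(e+1) = 2^e := by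
            rw [hi'c, hk'c, show (i:ℤ) - 2^(m+2) - ((k:ℤ) - 2^(m+2)) = (i:ℤ) - (k:ℤ) by ring, he]
          have hIH := ih (k - 2^(m+2)) (i - 2^(m+2)) e (by omega) (by omega) (by omega) (by omega)
            (by omega) he'
          rw [hIH]
          have hb : (((i - 2^(m+2):ℕ):ℤ) - 1)/4 = ((i:ℤ)-1)/4 - 2^m := by
            rw [hi'c]; omega
          have hr : ((((i - 2^(m+2):ℕ):ℤ)) - 1)%4 = ((i:ℤ)-1)%4 := by
            rw [hi'c]; omega
          have hrn : (i - 2^(m+2) - 1)%4 = (i-1)%4 := by omega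
          rw [hb, hr, hrn, hknr]
          split_ifs with h2e
          · have heM : e < m+2 := by
              by_contra hcc
              push_neg at hcc
              have heM2 : e < m+3 := e_lt he (by omega) (by omega)
              have hee : e = m+2 := by omega
              subst hee
              exact absurd (e_lt (n := m+2) he (by omega) (by omega)) (by omega)
            have hmm : (((i:ℤ)-1)/4 - 2^m) % 2^(e-1) = (((i:ℤ)-1)/4) % 2^(e-1) := by
              rw [show ((i:ℤ)-1)/4 - 2^m = ((i:ℤ)-1)/4 + 2^m * (-1) by ring]
              exact emod_add_pow_mul (by omega) _ _
            rw [hmm]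
            linear_combination (-4:ℤ) * hP1
          · linear_combination (-4:ℤ) * hP1

lemma exists_e (d : ℤ) (hd : d ≠ 0) : ∃ e : ℕ, d % 2^(e+1) = 2^e := by
  obtain ⟨x, m, hm2, hm⟩ := Nat.exists_eq_pow_mul_and_not_dvd (Int.natAbs_ne_zero.mpr hd) 2 (by norm_num)
  rcases Int.natAbs_eq d with he | he
  · exact ⟨x, by rw [he, hm]; push_cast
                 rw [show ((2:ℤ)^x * m) = (m:ℤ) * 2^x by ring]
                 exact odd_mul_pow_emod x m (by omega)⟩
  · exact ⟨x, by rw [he, hm]; push_cast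
                 rw [show (-((2:ℤ)^x * m)) = (-(m:ℤ)) * 2^x by ring]
                 exact odd_mul_pow_emod x (-(m:ℤ)) (by omega)⟩

lemma decompA (n k t e : ℕ) (hn : 2 ≤ n) (hk1 : 1 ≤ k) (hk2 : k ≤ 2^n)
    (ht1 : 1 ≤ t) (ht2 : t ≤ 2^n) (htk : t ≠ k)
    (he : ((t:ℤ) - (k:ℤ)) % 2^(e+1) = 2^e) (h2e : 2 ≤ e) :
    1 ≤ sigma n k t ∧ sigma n k t ≤ 2^n ∧
    (((sigma n k t - 1)/4 : ℕ) : ℤ)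
      = 2^(n-2) - 2^(e-1) + 2*((((t:ℤ)-1)/4) % 2^(e-1)) - ((t:ℤ)-1)/4 ∧
    (((sigma n k t - 1) % 4 : ℕ) : ℤ) = ((t:ℤ)-1)%4 := by
  obtain ⟨m, rfl⟩ : ∃ m, n = m + 2 := ⟨n - 2, by omega⟩
  simp only [Nat.add_sub_cancel]
  have hP2 : (2:ℤ)^(m+2) = 4 * 2^m := by rw [pow_add]; ring
  have hPn : (2^(m+2):ℕ) = 4 * 2^m := by rw [pow_add]; ring
  have hc2 : ((2^m : ℕ) : ℤ) = 2^m := by exact_mod_cast rfl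
  have hc22 : ((2^(m+2) : ℕ) : ℤ) = 2^(m+2) := by exact_mod_cast rfl
  have ht2' : (t:ℤ) ≤ 2^(m+2) := by rw [← hc22]; exact_mod_cast ht2
  have hk2' : (k:ℤ) ≤ 2^(m+2) := by rw [← hc22]; exact_mod_cast hk2
  have hk1' : (1:ℤ) ≤ (k:ℤ) := by exact_mod_cast hk1
  have ht1' : (1:ℤ) ≤ (t:ℤ) := by exact_mod_cast ht1
  have heM : e < m + 2 := e_lt he (by omega) (by omega)
  have hσ := sigma_eq m k t e hk1 hk2 ht1 ht2 htk he
  rw [if_pos h2e] at hσ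
  set b : ℤ := ((t:ℤ)-1)/4 with hbdef
  set M : ℤ := b % 2^(e-1) with hMdef
  have hb0 : 0 ≤ b := by omega
  have hb1 : b < 2^m := by omega
  have hM0 : 0 ≤ M := Int.emod_nonneg b (by positivity)
  have hM1 : M < 2^(e-1) := Int.emod_lt_of_pos b (by positivity)
  have hsplit : 2^(e-1) * (b / 2^(e-1)) + M = b := Int.mul_ediv_add_emod b (2^(e-1))
  have hq0 : 0 ≤ b / 2^(e-1) := Int.ediv_nonneg hb0 (by positivity)
  have hK : (2:ℤ)^(e-1) * 2^(m-(e-1)) = 2^m := by rw [← pow_add]; congr 1; omega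
  have hq1 : 2^(e-1) * (b / 2^(e-1)) ≤ 2^m - 2^(e-1) := by
    have hq : b / 2^(e-1) < 2^(m-(e-1)) := by
      by_contra h
      push_neg at h
      have h2 : (2:ℤ)^(e-1) * 2^(m-(e-1)) ≤ 2^(e-1) * (b / 2^(e-1)) :=
        mul_le_mul_of_nonneg_left h (by positivity)
      rw [hK] at h2
      linarith
    have h1 : b / 2^(e-1) ≤ 2^(m-(e-1)) - 1 := by omega
    have h2 : (2:ℤ)^(e-1) * (b / 2^(e-1)) ≤ 2^(e-1) * (2^(m-(e-1)) - 1) :=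
      mul_le_mul_of_nonneg_left h1 (by positivity)
    calc (2:ℤ)^(e-1) * (b / 2^(e-1)) ≤ 2^(e-1) * (2^(m-(e-1)) - 1) := h2
      _ = 2^m - 2^(e-1) := by rw [mul_sub, hK]; ring
  set B : ℤ := 2^m - 2^(e-1) + 2*M - b with hBdef
  have hB0 : 0 ≤ B := by rw [hBdef]; linarith
  have hprod : (0:ℤ) ≤ 2^(e-1) * (b / 2^(e-1)) := mul_nonneg (by positivity) hq0
  have hB1 : B < 2^m := by rw [hBdef]; linarith
  have hr0 : 0 ≤ ((t:ℤ)-1)%4 := by omega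
  have hr1 : ((t:ℤ)-1)%4 < 4 := by omega
  have hσ' : (sigma (m+2) k t : ℤ) = 4*B + ((t:ℤ)-1)%4 + 1 := hσ
  have hs1 : 1 ≤ sigma (m+2) k t := by omega
  have hs2 : sigma (m+2) k t ≤ 2^(m+2) := by omega
  refine ⟨hs1, hs2, by omega, by omega⟩

lemma sigma4_facts : ∀ l < 4, ∀ a < 4, a ≠ l →
    1 ≤ sigma4 (l+1) (a+1) ∧ sigma4 (l+1) (a+1) ≤ 4 ∧ sigma4 (l+1) (a+1) ≠ l+1 := by decide

lemma rne_of_e01 {t k : ℕ} (e : ℕ) (ht : 1 ≤ t) (hk : 1 ≤ k)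
    (he : ((t:ℤ) - (k:ℤ)) % 2^(e+1) = 2^e) (h2e : e < 2) : (t-1)%4 ≠ (k-1)%4 := by
  obtain ⟨y, hy, hd⟩ := e_rep he
  interval_cases e
  · rw [pow_zero, mul_one] at hd
    omega
  · rw [pow_one] at hd
    omega

lemma req_of_e2 {t k : ℕ} (e : ℕ) (ht : 1 ≤ t) (hk : 1 ≤ k)
    (he : ((t:ℤ) - (k:ℤ)) % 2^(e+1) = 2^e) (h2e : 2 ≤ e) : (t-1)%4 = (k-1)%4 := by
  obtain ⟨y, hy, hd⟩ := e_rep he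
  obtain ⟨c, hc⟩ : ∃ c : ℤ, (t:ℤ) - k = 4 * c := by
    refine ⟨y * 2^(e-2), ?_⟩
    have hee : (2:ℤ)^e = 4 * 2^(e-2) := by
      conv_lhs => rw [show e = 2 + (e-2) by omega]
      rw [pow_add]; ring
    rw [hd, hee]; ring
  omega

lemma decompB (n k t e : ℕ) (hn : 2 ≤ n) (hk1 : 1 ≤ k) (hk2 : k ≤ 2^n)
    (ht1 : 1 ≤ t) (ht2 : t ≤ 2^n) (htk : t ≠ k)
    (he : ((t:ℤ) - (k:ℤ)) % 2^(e+1) = 2^e) (h2e : e < 2) :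
    1 ≤ sigma n k t ∧ sigma n k t ≤ 2^n ∧
    (((sigma n k t - 1)/4 : ℕ) : ℤ) = 2^(n-2) - 1 - ((t:ℤ)-1)/4 ∧
    (sigma n k t - 1) % 4 + 1 = sigma4 ((k-1)%4+1) ((t-1)%4+1) := by
  obtain ⟨m, rfl⟩ : ∃ m, n = m + 2 := ⟨n - 2, by omega⟩
  simp only [Nat.add_sub_cancel]
  have hP2 : (2:ℤ)^(m+2) = 4 * 2^m := by rw [pow_add]; ring
  have hPn : (2^(m+2):ℕ) = 4 * 2^m := by rw [pow_add]; ring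
  have hc2 : ((2^m : ℕ) : ℤ) = 2^m := by exact_mod_cast rfl
  have hc22 : ((2^(m+2) : ℕ) : ℤ) = 2^(m+2) := by exact_mod_cast rfl
  have ht2' : (t:ℤ) ≤ 2^(m+2) := by rw [← hc22]; exact_mod_cast ht2
  have ht1' : (1:ℤ) ≤ (t:ℤ) := by exact_mod_cast ht1
  have hσ := sigma_eq m k t e hk1 hk2 ht1 ht2 htk he
  rw [if_neg (by omega)] at hσ
  have hrne := rne_of_e01 e ht1 hk1 he h2e
  have hs4 := sigma4_facts ((k-1)%4) (by omega) ((t-1)%4) (by omega) hrne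
  set s4 : ℕ := sigma4 ((k-1)%4+1) ((t-1)%4+1) with hs4def
  set b : ℤ := ((t:ℤ)-1)/4 with hbdef
  have hb0 : 0 ≤ b := by omega
  have hb1 : b < 2^m := by omega
  have hσ' : (sigma (m+2) k t : ℤ) = 4*(2^m - 1 - b) + s4 := hσ
  have hB0 : (0:ℤ) ≤ 2^m - 1 - b := by omega
  have hB1 : (2:ℤ)^m - 1 - b < 2^m := by omega
  have hs41 : 1 ≤ s4 := hs4.1
  have hs42 : s4 ≤ 4 := hs4.2.1
  refine ⟨by omega, by omega, by omega, by omega⟩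

lemma L_base : ∀ l < 4, ∀ a < 4, ∀ b < 4, a ≠ l → b ≠ l →
    M4 (a+1) (b+1) = M4s (sigma4 (l+1) (a+1)) (sigma4 (l+1) (b+1)) := by decide

lemma L_row : ∀ l < 4, ∀ a < 4, a ≠ l →
    M4s (l+1) (sigma4 (l+1) (a+1)) = -(M4 (l+1) (a+1)) := by decide

lemma L_col : ∀ l < 4, ∀ a < 4, a ≠ l →
    M4s (sigma4 (l+1) (a+1)) (l+1) = -(M4 (a+1) (l+1)) := by decide

lemma L_inj : ∀ l < 4, ∀ a < 4, ∀ b < 4, a ≠ l → b ≠ l →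
    sigma4 (l+1) (a+1) = sigma4 (l+1) (b+1) → a = b := by
  intro l hl a ha b hb
  interval_cases l <;> interval_cases a <;> interval_cases b <;> decide

lemma L_diag : ∀ r < 4, M4 (r+1) (r+1) = 0 ∧ M4s (r+1) (r+1) = 0 := by decide

lemma Mp_eq {n i j : ℕ} (h1 : 1 ≤ i) (h2 : i ≤ 2^n) (h3 : 1 ≤ j) (h4 : j ≤ 2^n) :
    Mp n i j = Ment i j := by
  unfold Mp; exact if_pos ⟨h1, h2, h3, h4⟩

lemma Mps_eq {n i j : ℕ} (h1 : 1 ≤ i) (h2 : i ≤ 2^n) (h3 : 1 ≤ j) (h4 : j ≤ 2^n) :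
    Mps n i j = Ments i j := by
  unfold Mps; exact if_pos ⟨h1, h2, h3, h4⟩

/-- For each `p = 2^n` with `n ≥ 2`, each `k` from 1 to `p`, and all
`i, j` from 1 to `p` distinct from `k`, `M_p[i,j] = M_p*[σ_{p,k}(i), σ_{p,k}(j)]`;
i.e. the edge-weighted digraphs `M_p`, `M_p*` are hypomorphic under the `σ_{p,k}`. -/
theorem stmt11 (n p : ℕ) (hn : 2 ≤ n) (hp : p = 2^n)
    (k : ℕ) (hk1 : 1 ≤ k) (hk2 : k ≤ p)
    (i j : ℕ) (hi1 : 1 ≤ i) (hi2 : i ≤ p) (hj1 : 1 ≤ j) (hj2 : j ≤ p)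
    (hik : i ≠ k) (hjk : j ≠ k) :
    Mp n i j = Mps n (sigma n k i) (sigma n k j) := by
  subst hp
  have hiknz : ((i:ℤ) - (k:ℤ)) ≠ 0 := sub_ne_zero.mpr (by exact_mod_cast hik)
  have hjknz : ((j:ℤ) - (k:ℤ)) ≠ 0 := sub_ne_zero.mpr (by exact_mod_cast hjk)
  obtain ⟨ei, hei⟩ := exists_e _ hiknz
  obtain ⟨ej, hej⟩ := exists_e _ hjknz
  have hBi : (((i-1)/4:ℕ):ℤ) = ((i:ℤ)-1)/4 := by omega
  have hBj : (((j-1)/4:ℕ):ℤ) = ((j:ℤ)-1)/4 := by omega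
  have hri4 : (i-1)%4 < 4 := Nat.mod_lt _ (by norm_num)
  have hrj4 : (j-1)%4 < 4 := Nat.mod_lt _ (by norm_num)
  have hrk4 : (k-1)%4 < 4 := Nat.mod_lt _ (by norm_num)
  rw [Mp_eq hi1 hi2 hj1 hj2]
  by_cases hEi : 2 ≤ ei <;> by_cases hEj : 2 ≤ ej
  · -- case AA
    obtain ⟨hσi1, hσi2, hσiB, hσiR⟩ := decompA _ k i ei hn hk1 hk2 hi1 hi2 hik hei hEi
    obtain ⟨hσj1, hσj2, hσjB, hσjR⟩ := decompA _ k j ej hn hk1 hk2 hj1 hj2 hjk hej hEj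
    rw [show ei - 1 = (ei-2)+1 by omega] at hσiB
    rw [show ej - 1 = (ej-2)+1 by omega] at hσjB
    have hri : (i-1)%4 = (k-1)%4 := req_of_e2 ei hi1 hk1 hei hEi
    have hrj : (j-1)%4 = (k-1)%4 := req_of_e2 ej hj1 hk1 hej hEj
    rw [Mps_eq hσi1 hσi2 hσj1 hσj2]
    simp only [Ment, Ments]
    have hg1 : (i-1)%4 = (j-1)%4 := by omega
    have hg2 : (sigma n k i - 1)%4 = (sigma n k j - 1)%4 := by omega
    rw [if_pos hg1, if_pos hg2, hBi, hBj, hσiB, hσjB, hg1, hg2]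
    rw [(L_diag ((j-1)%4) hrj4).1, (L_diag ((sigma n k j - 1)%4) (Nat.mod_lt _ (by norm_num))).2]
    rw [mul_zero, mul_zero, zero_add, zero_add]
    rw [show (2^(n-2) - 2^((ej-2)+1) + 2*((((j:ℤ)-1)/4) % 2^((ej-2)+1)) - ((j:ℤ)-1)/4)
          - (2^(n-2) - 2^((ei-2)+1) + 2*((((i:ℤ)-1)/4) % 2^((ei-2)+1)) - ((i:ℤ)-1)/4)
        = 2^((ei-2)+1) - 2^((ej-2)+1) + 2*((((j:ℤ)-1)/4) % 2^((ej-2)+1))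
          - 2*((((i:ℤ)-1)/4) % 2^((ei-2)+1)) - ((j:ℤ)-1)/4 + ((i:ℤ)-1)/4 by ring]
    have hIK4 : (i:ℤ) - k = 4*(((i:ℤ)-1)/4 - ((k:ℤ)-1)/4) := by omega
    have hJK4 : (j:ℤ) - k = 4*(((j:ℤ)-1)/4 - ((k:ℤ)-1)/4) := by omega
    have hea : (((i:ℤ)-1)/4 - ((k:ℤ)-1)/4) % 2^((ei-2)+1) = 2^(ei-2) := by
      have hpei : (2:ℤ)^(ei+1) = 4 * 2^((ei-2)+1) := by
        conv_lhs => rw [show ei+1 = 2 + ((ei-2)+1) by omega]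
        rw [pow_add]; norm_num
      have hpei2 : (2:ℤ)^ei = 4 * 2^(ei-2) := by
        conv_lhs => rw [show ei = 2 + (ei-2) by omega]
        rw [pow_add]; norm_num
      have h := hei
      rw [hIK4, hpei, Int.mul_emod_mul_of_pos _ _ (show (0:ℤ) < 4 by norm_num), hpei2] at h
      exact mul_left_cancel₀ (show (4:ℤ) ≠ 0 by norm_num) h
    have heb : (((j:ℤ)-1)/4 - ((k:ℤ)-1)/4) % 2^((ej-2)+1) = 2^(ej-2) := by
      have hpej : (2:ℤ)^(ej+1) = 4 * 2^((ej-2)+1) := by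
        conv_lhs => rw [show ej+1 = 2 + ((ej-2)+1) by omega]
        rw [pow_add]; norm_num
      have hpej2 : (2:ℤ)^ej = 4 * 2^(ej-2) := by
        conv_lhs => rw [show ej = 2 + (ej-2) by omega]
        rw [pow_add]; norm_num
      have h := hej
      rw [hJK4, hpej, Int.mul_emod_mul_of_pos _ _ (show (0:ℤ) < 4 by norm_num), hpej2] at h
      exact mul_left_cancel₀ (show (4:ℤ) ≠ 0 by norm_num) h
    have key := lemA (ei-2) (ej-2) (((i:ℤ)-1)/4) (((j:ℤ)-1)/4) (((k:ℤ)-1)/4) hea heb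
    linarith [key]
  · -- case AB
    obtain ⟨hσi1, hσi2, hσiB, hσiR⟩ := decompA _ k i ei hn hk1 hk2 hi1 hi2 hik hei hEi
    obtain ⟨hσj1, hσj2, hσjB, hσjR⟩ := decompB _ k j ej hn hk1 hk2 hj1 hj2 hjk hej (by omega)
    rw [show ei - 1 = (ei-2)+1 by omega] at hσiB
    have hri : (i-1)%4 = (k-1)%4 := req_of_e2 ei hi1 hk1 hei hEi
    have hrnej : (j-1)%4 ≠ (k-1)%4 := rne_of_e01 ej hj1 hk1 hej (by omega)
    have hs4j := sigma4_facts ((k-1)%4) hrk4 ((j-1)%4) hrj4 hrnej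
    rw [Mps_eq hσi1 hσi2 hσj1 hσj2]
    simp only [Ment, Ments]
    have hg1 : ¬((i-1)%4 = (j-1)%4) := by omega
    have hg2 : ¬((sigma n k i - 1)%4 = (sigma n k j - 1)%4) := by omega
    rw [if_neg hg1, if_neg hg2, hBi, hBj, hσiB, hσjB, add_zero, add_zero]
    have hriσ : (sigma n k i - 1)%4 = (k-1)%4 := by omega
    rw [hriσ, hσjR, hri]
    rw [L_row ((k-1)%4) hrk4 ((j-1)%4) hrj4 hrnej]
    rw [blockSC_sign, blockSC_sign]
    have hpoweven : (2:ℤ)^((ei-2)+1) = 2*2^(ei-2) := by rw [pow_succ]; ring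
    rw [show ((2^(n-2) - 1 - ((j:ℤ)-1)/4)
          - (2^(n-2) - 2^((ei-2)+1) + 2*((((i:ℤ)-1)/4) % 2^((ei-2)+1)) - ((i:ℤ)-1)/4))
        = -(((j:ℤ)-1)/4 - ((i:ℤ)-1)/4) - 1
          + 2*(2^(ei-2) - (((i:ℤ)-1)/4) % 2^((ei-2)+1)) by linear_combination hpoweven]
    by_cases hp2 : (((j:ℤ)-1)/4 - ((i:ℤ)-1)/4) % 2 = 0
    · rw [if_pos hp2, if_neg (by omega)]
      ring
    · rw [if_neg hp2, if_pos (by omega)]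
      ring
  · -- case BA
    obtain ⟨hσi1, hσi2, hσiB, hσiR⟩ := decompB _ k i ei hn hk1 hk2 hi1 hi2 hik hei (by omega)
    obtain ⟨hσj1, hσj2, hσjB, hσjR⟩ := decompA _ k j ej hn hk1 hk2 hj1 hj2 hjk hej hEj
    rw [show ej - 1 = (ej-2)+1 by omega] at hσjB
    have hrj : (j-1)%4 = (k-1)%4 := req_of_e2 ej hj1 hk1 hej hEj
    have hrnei : (i-1)%4 ≠ (k-1)%4 := rne_of_e01 ei hi1 hk1 hei (by omega)
    have hs4i := sigma4_facts ((k-1)%4) hrk4 ((i-1)%4) hri4 hrnei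
    rw [Mps_eq hσi1 hσi2 hσj1 hσj2]
    simp only [Ment, Ments]
    have hg1 : ¬((i-1)%4 = (j-1)%4) := by omega
    have hg2 : ¬((sigma n k i - 1)%4 = (sigma n k j - 1)%4) := by omega
    rw [if_neg hg1, if_neg hg2, hBi, hBj, hσiB, hσjB, add_zero, add_zero]
    have hrjσ : (sigma n k j - 1)%4 = (k-1)%4 := by omega
    rw [hrjσ, hσiR, hrj]
    rw [L_col ((k-1)%4) hrk4 ((i-1)%4) hri4 hrnei]
    rw [blockSC_sign, blockSC_sign]
    have hpoweven : (2:ℤ)^((ej-2)+1) = 2*2^(ej-2) := by rw [pow_succ]; ring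
    rw [show ((2^(n-2) - 2^((ej-2)+1) + 2*((((j:ℤ)-1)/4) % 2^((ej-2)+1)) - ((j:ℤ)-1)/4)
          - (2^(n-2) - 1 - ((i:ℤ)-1)/4))
        = -(((j:ℤ)-1)/4 - ((i:ℤ)-1)/4) + 1
          + 2*((((j:ℤ)-1)/4) % 2^((ej-2)+1) - 2^(ej-2))
        by linear_combination hpoweven]
    by_cases hp2 : (((j:ℤ)-1)/4 - ((i:ℤ)-1)/4) % 2 = 0
    · rw [if_pos hp2, if_neg (by omega)]
      ring
    · rw [if_neg hp2, if_pos (by omega)]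
      ring
  · -- case BB
    obtain ⟨hσi1, hσi2, hσiB, hσiR⟩ := decompB _ k i ei hn hk1 hk2 hi1 hi2 hik hei (by omega)
    obtain ⟨hσj1, hσj2, hσjB, hσjR⟩ := decompB _ k j ej hn hk1 hk2 hj1 hj2 hjk hej (by omega)
    have hrnei : (i-1)%4 ≠ (k-1)%4 := rne_of_e01 ei hi1 hk1 hei (by omega)
    have hrnej : (j-1)%4 ≠ (k-1)%4 := rne_of_e01 ej hj1 hk1 hej (by omega)
    have hs4i := sigma4_facts ((k-1)%4) hrk4 ((i-1)%4) hri4 hrnei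
    have hs4j := sigma4_facts ((k-1)%4) hrk4 ((j-1)%4) hrj4 hrnej
    rw [Mps_eq hσi1 hσi2 hσj1 hσj2]
    simp only [Ment, Ments]
    rw [hBi, hBj, hσiB, hσjB]
    rw [show (2^(n-2) - 1 - ((j:ℤ)-1)/4) - (2^(n-2) - 1 - ((i:ℤ)-1)/4)
        = -(((j:ℤ)-1)/4 - ((i:ℤ)-1)/4) by ring]
    by_cases hg1 : (i-1)%4 = (j-1)%4
    · have hs4eq : sigma4 ((k-1)%4+1) ((i-1)%4+1) = sigma4 ((k-1)%4+1) ((j-1)%4+1) := by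
        rw [hg1]
      have hg2 : (sigma n k i - 1)%4 = (sigma n k j - 1)%4 := by omega
      rw [if_pos hg1, if_pos hg2, hg1, hg2]
      rw [(L_diag ((j-1)%4) hrj4).1, (L_diag ((sigma n k j - 1)%4) (Nat.mod_lt _ (by norm_num))).2]
      rw [mul_zero, mul_zero, zero_add, zero_add, blockSC_neg_s11]
      ring
    · have hg2 : ¬((sigma n k i - 1)%4 = (sigma n k j - 1)%4) := by
        intro hcc
        apply hg1
        apply L_inj ((k-1)%4) hrk4 ((i-1)%4) hri4 ((j-1)%4) hrj4 hrnei hrnej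
        omega
      rw [if_neg hg1, if_neg hg2, add_zero, add_zero, hσiR, hσjR]
      rw [← L_base ((k-1)%4) hrk4 ((i-1)%4) hri4 ((j-1)%4) hrj4 hrnei hrnej]
      rw [blockSC_sign, blockSC_sign]
      have hpar : (-(((j:ℤ)-1)/4 - ((i:ℤ)-1)/4)) % 2 = (((j:ℤ)-1)/4 - ((i:ℤ)-1)/4) % 2 := by
        omega
      rw [hpar]
end
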